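/- arXiv:2304.10350 — 6 statements merged into one kernel-verified Lean document; each statement's English description precedes it below -/
import Mathlib

section
/- For positive reals l, r, k' with l ≤ r, the quantity (l+r)·log(k'/(l+r)) − r·log(k'/r) − l·log(k'/l) is at most −l. -/
open Real

lemma mul_log_div_sub_sub_eq {k a b : ℝ} (hk : k ≠ 0) (ha : a ≠ 0) (hb : b ≠ 0)
    (hab : a + b ≠ 0) :
    (a + b) * log (k / (a + b)) - b * log (k / b) - a * log (k / a)
      = a * log (a / (a + b)) + b * log (b / (a + b)) := by
  rw [log_div hk hab, log_div hk hb, log_div hk ha, log_div ha hab, log_div hb hab]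
  ring

lemma mul_log_div_add_mul_log_div_le {a b : ℝ} (ha : 0 < a) (hb : 0 < b) :
    a * log (a / (a + b)) + b * log (b / (a + b)) ≤ -(2 * a * b / (a + b)) := by
  have hab : 0 < a + b := add_pos ha hb
  calc a * log (a / (a + b)) + b * log (b / (a + b))
      ≤ a * (a / (a + b) - 1) + b * (b / (a + b) - 1) := by
        gcongr <;> exact log_le_sub_one_of_pos (by positivity)
    _ = -(2 * a * b / (a + b)) := by field_simp; ring

theorem stmt_1 (l r k' : ℝ) (hl : 0 < l) (hr : 0 < r) (hk : 0 < k') (hlr : l ≤ r) :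
    (l + r) * Real.log (k' / (l + r)) - r * Real.log (k' / r) - l * Real.log (k' / l) ≤ -l := by
  have hlr' : 0 < l + r := add_pos hl hr
  rw [mul_log_div_sub_sub_eq hk.ne' hl.ne' hr.ne' hlr'.ne']
  refine (mul_log_div_add_mul_log_div_le hl hr).trans ?_
  rw [neg_le_neg_iff, le_div_iff₀ hlr']
  nlinarith
end

section
/- Let I and J be two finite sets of consecutive integers (segments) that overlap, and suppose each is δ-monochromatic: strictly more than δ|I| elements of I have color c_I and strictly more than δ|J| elements of J have color c_J, for some coloring of the integers. If |I ∩ J| ≥ α·max{|I|, |J|} and δ ≥ 1 − α/2 (with 0 < α ≤ 1, 0 < δ < 1), then c_I = c_J. -/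
open Finset

-- Each element of `s ∩ t` lacks colour `b` or lacks colour `b'`.
theorem card_inter_add_card_filter_eq_add_card_filter_eq_le {α β : Type*} [DecidableEq α]
    [DecidableEq β] (f : α → β) {b b' : β} (hb : b ≠ b') (s t : Finset α) :
    #(s ∩ t) + #{x ∈ s | f x = b} + #{x ∈ t | f x = b'} ≤ #s + #t := by
  have hcover : s ∩ t ⊆ {x ∈ s | ¬f x = b} ∪ {x ∈ t | ¬f x = b'} := by
    intro x hx
    obtain ⟨hxs, hxt⟩ := mem_inter.1 hx
    by_cases hxb : f x = b
    · exact mem_union_right _ (mem_filter.2 ⟨hxt, hxb ▸ hb⟩)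
    · exact mem_union_left _ (mem_filter.2 ⟨hxs, hxb⟩)
  have hs := card_filter_add_card_filter_not (fun x => f x = b) (s := s)
  have ht := card_filter_add_card_filter_not (fun x => f x = b') (s := t)
  have := (card_le_card hcover).trans (card_union_le _ _)
  omega

theorem stmt_3_general {C : Type*} [DecidableEq C] (col : ℤ → C) (cI cJ : C) (δ α : ℝ)
    (I J : Finset ℤ)
    (hα0 : 0 < α)
    (hmonoI : ((I.filter (fun x => col x = cI)).card : ℝ) > δ * I.card)
    (hmonoJ : ((J.filter (fun x => col x = cJ)).card : ℝ) > δ * J.card)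
    (hinter : ((I ∩ J).card : ℝ) ≥ α * max (I.card : ℝ) (J.card : ℝ))
    (hδα : δ ≥ 1 - α / 2) :
    cI = cJ := by
  by_contra hne
  have hcount : ((I ∩ J).card : ℝ) + (I.filter (fun x => col x = cI)).card
      + (J.filter (fun x => col x = cJ)).card ≤ I.card + J.card := by
    exact_mod_cast card_inter_add_card_filter_eq_add_card_filter_eq_le col hne I J
  -- `|I ∩ J| < (1 - δ)(|I| + |J|) ≤ (α / 2)(|I| + |J|) ≤ α max(|I|, |J|)`
  have hδ : (1 - δ) * (I.card + J.card : ℝ) ≤ α / 2 * (I.card + J.card) :=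
    mul_le_mul_of_nonneg_right (by linarith) (by positivity)
  have hsum : (I.card + J.card : ℝ) ≤ 2 * max (I.card : ℝ) J.card := by
    linarith [le_max_left (I.card : ℝ) J.card, le_max_right (I.card : ℝ) J.card]
  have hmax := mul_le_mul_of_nonneg_left hsum hα0.le
  linarith

theorem stmt_3 {C : Type*} [DecidableEq C] (col : ℤ → C) (cI cJ : C) (δ α : ℝ)
    (a b a' b' : ℤ) (I J : Finset ℤ) (hI : I = Finset.Icc a b) (hJ : J = Finset.Icc a' b')
    (hoverlap : (I ∩ J).Nonempty)
    (hα0 : 0 < α) (hα1 : α ≤ 1) (hδ0 : 0 < δ) (hδ1 : δ < 1)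
    (hmonoI : ((I.filter (fun x => col x = cI)).card : ℝ) > δ * I.card)
    (hmonoJ : ((J.filter (fun x => col x = cJ)).card : ℝ) > δ * J.card)
    (hinter : ((I ∩ J).card : ℝ) ≥ α * max (I.card : ℝ) (J.card : ℝ))
    (hδα : δ ≥ 1 - α / 2) :
    cI = cJ :=
  stmt_3_general col cI cJ δ α I J hα0 hmonoI hmonoJ hinter hδα
end

section
/- Let I_1, …, I_m be intervals, each δ-monochromatic for the same color c (i.e., the number of color-c elements in I_i is at least δ|I_i|), such that I = ⋃_i I_i is a single contiguous segment. Then I is δ/(2−δ)-monochromatic for c, i.e., the number of color-c elements in I is at least (δ/(2−δ))·|I|. -/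
/-!
Pass to a subfamily of the intervals of minimal size with the same union. It covers no point
three times: of three intervals through a common point, the one reaching furthest left and the one
reaching furthest right cover the third. Summing `[col x = c] - δ` over the members of this
subfamily gives a nonnegative total in which each point of `I` is counted once or twice; a point of
colour `c` thus contributes at most `2 (1 - δ)` and any other point at most `-δ`, which is
pointwise at most `(2 - δ) [col x = c] - δ`.
-/

open Finset

section

variable {ι α : Type*}

theorem sum_sum_eq_sum_card_smul [DecidableEq α] {M : Type*} [AddCommMonoid M]
    (T : Finset ι) (J : ι → Finset α) (g : α → M) :
    ∑ i ∈ T, ∑ x ∈ J i, g x = ∑ x ∈ T.biUnion J, #{i ∈ T | x ∈ J i} • g x := by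
  rw [sum_comm' (t' := T.biUnion J) (s' := fun x => {i ∈ T | x ∈ J i})]
  · simp only [sum_const]
  · intro i x
    simp only [mem_biUnion, mem_filter]
    exact ⟨fun h => ⟨⟨h.1, h.2⟩, i, h⟩, fun h => h.1⟩

theorem mul_card_biUnion_le_of_card_le_two [DecidableEq α] (p : α → Prop) [DecidablePred p]
    {δ : ℝ} (hδ0 : 0 ≤ δ) (hδ1 : δ ≤ 1) (T : Finset ι) (J : ι → Finset α)
    (hmult : ∀ x ∈ T.biUnion J, #{i ∈ T | x ∈ J i} ≤ 2)
    (hdense : ∀ i ∈ T, δ * #(J i) ≤ #{x ∈ J i | p x}) :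
    δ * #(T.biUnion J) ≤ (2 - δ) * #{x ∈ T.biUnion J | p x} := by
  set g : α → ℝ := fun x => (if p x then 1 else 0) - δ
  have hsum : 0 ≤ ∑ i ∈ T, ∑ x ∈ J i, g x := sum_nonneg fun i hi => by
    simp only [g, sum_sub_distrib, sum_boole, sum_const, nsmul_eq_mul]
    linarith [hdense i hi]
  have hpoint : ∀ x ∈ T.biUnion J,
      #{i ∈ T | x ∈ J i} • g x ≤ (2 - δ) * (if p x then 1 else 0) - δ := by
    intro x hx
    obtain ⟨i, hi, hxi⟩ := mem_biUnion.mp hx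
    have hpos : 0 < #{i ∈ T | x ∈ J i} := card_pos.mpr ⟨i, mem_filter.mpr ⟨hi, hxi⟩⟩
    have hle : (#{i ∈ T | x ∈ J i} : ℝ) ≤ 2 := by exact_mod_cast hmult x hx
    have hge : (1 : ℝ) ≤ #{i ∈ T | x ∈ J i} := by exact_mod_cast hpos
    rw [nsmul_eq_mul]
    by_cases hp : p x <;> simp only [g, hp, if_true, if_false] <;> nlinarith
  rw [sum_sum_eq_sum_card_smul] at hsum
  have htotal := hsum.trans (sum_le_sum hpoint)
  simp only [sum_sub_distrib, ← mul_sum, sum_boole, sum_const, nsmul_eq_mul] at htotal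
  linarith

theorem Finset.Icc_subset_Icc_union_Icc_of_mem [LinearOrder α] [LocallyFiniteOrder α]
    {a₁ b₁ a₂ b₂ a b x : α} (hx₁ : x ∈ Icc a₁ b₁) (hx₂ : x ∈ Icc a₂ b₂) (ha : a₁ ≤ a)
    (hb : b ≤ b₂) : Icc a b ⊆ Icc a₁ b₁ ∪ Icc a₂ b₂ := by
  intro y hy
  rw [mem_Icc] at hx₁ hx₂ hy
  rw [mem_union, mem_Icc, mem_Icc]
  rcases le_total y x with hyx | hxy
  · exact Or.inl ⟨ha.trans hy.1, hyx.trans hx₁.2⟩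
  · exact Or.inr ⟨hx₂.1.trans hxy, hy.2.trans hb⟩

theorem exists_subset_biUnion_Icc_eq_and_card_le_two [DecidableEq ι] [LinearOrder α]
    [LocallyFiniteOrder α] (S : Finset ι) (a b : ι → α) :
    ∃ T ⊆ S, T.biUnion (fun i => Icc (a i) (b i)) = S.biUnion (fun i => Icc (a i) (b i)) ∧
      ∀ x, #{i ∈ T | x ∈ Icc (a i) (b i)} ≤ 2 := by
  set I : ι → Finset α := fun i => Icc (a i) (b i)
  obtain ⟨T, hT, hTmin⟩ := exists_min_image {T ∈ S.powerset | T.biUnion I = S.biUnion I} card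
    ⟨S, mem_filter.mpr ⟨mem_powerset_self S, rfl⟩⟩
  rw [mem_filter, mem_powerset] at hT
  refine ⟨T, hT.1, hT.2, fun x => ?_⟩
  by_contra! h3
  set M := {i ∈ T | x ∈ I i}
  have hM : M.Nonempty := card_pos.mp (by omega)
  obtain ⟨i₀, hi₀, hi₀min⟩ := exists_min_image M a hM
  obtain ⟨j₀, hj₀, hj₀max⟩ := exists_max_image M b hM
  obtain ⟨k, hk⟩ : ((M.erase i₀).erase j₀).Nonempty := by
    have h1 := pred_card_le_card_erase (s := M) (a := i₀)
    have h2 := pred_card_le_card_erase (s := M.erase i₀) (a := j₀)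
    exact card_pos.mp (by omega)
  obtain ⟨hkj₀, hki₀, hkM⟩ : k ≠ j₀ ∧ k ≠ i₀ ∧ k ∈ M := by
    simpa only [mem_erase] using hk
  rw [mem_filter] at hi₀ hj₀ hkM
  have hcover : I k ⊆ (T.erase k).biUnion I :=
    (Icc_subset_Icc_union_Icc_of_mem hi₀.2 hj₀.2 (hi₀min k (mem_filter.mpr hkM))
      (hj₀max k (mem_filter.mpr hkM))).trans <| union_subset
        (subset_biUnion_of_mem I (mem_erase.mpr ⟨hki₀.symm, hi₀.1⟩))
        (subset_biUnion_of_mem I (mem_erase.mpr ⟨hkj₀.symm, hj₀.1⟩))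
  have herase : (T.erase k).biUnion I = S.biUnion I := by
    rw [← hT.2]
    conv_rhs => rw [← insert_erase hkM.1, biUnion_insert, union_eq_right.mpr hcover]
  have hcard := hTmin (T.erase k)
    (mem_filter.mpr ⟨mem_powerset.mpr ((erase_subset k T).trans hT.1), herase⟩)
  exact (card_erase_lt_of_mem hkM.1).not_ge hcard

end

theorem stmt_5_general {C : Type*} [DecidableEq C] (col : ℤ → C) (c : C) (δ : ℝ) (m : ℕ)
    (a b : Fin m → ℤ) (lo hi : ℤ)
    (hδ0 : 0 < δ) (hδ1 : δ ≤ 1)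
    (hunion : Finset.Icc lo hi = (Finset.univ : Finset (Fin m)).biUnion
      (fun i => Finset.Icc (a i) (b i)))
    (hmono : ∀ i, δ * ((Finset.Icc (a i) (b i)).card : ℝ) ≤
      (((Finset.Icc (a i) (b i)).filter (fun x => col x = c)).card : ℝ)) :
    δ * ((Finset.Icc lo hi).card : ℝ) ≤
      (2 - δ) * (((Finset.Icc lo hi).filter (fun x => col x = c)).card : ℝ) := by
  obtain ⟨T, -, hTunion, hTmult⟩ := exists_subset_biUnion_Icc_eq_and_card_le_two univ a b
  rw [hunion, ← hTunion]
  exact mul_card_biUnion_le_of_card_le_two (col · = c) hδ0.le hδ1 T _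
    (fun x _ => hTmult x) (fun i _ => hmono i)

theorem stmt_5 {C : Type*} [DecidableEq C] (col : ℤ → C) (c : C) (δ : ℝ) (m : ℕ) (hm : 0 < m)
    (a b : Fin m → ℤ) (lo hi : ℤ)
    (hδ0 : 0 < δ) (hδ1 : δ ≤ 1)
    (hunion : Finset.Icc lo hi = (Finset.univ : Finset (Fin m)).biUnion
      (fun i => Finset.Icc (a i) (b i)))
    (hmono : ∀ i, δ * ((Finset.Icc (a i) (b i)).card : ℝ) ≤
      (((Finset.Icc (a i) (b i)).filter (fun x => col x = c)).card : ℝ)) :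
    δ * ((Finset.Icc lo hi).card : ℝ) ≤
      (2 - δ) * (((Finset.Icc lo hi).filter (fun x => col x = c)).card : ℝ) :=
  stmt_5_general col c δ m a b lo hi hδ0 hδ1 hunion hmono
end

section
/- Let smin(x) = −ln(Σ_i e^{−x_i}) and let ∇smin(x)_i = e^{−x_i}/Σ_j e^{−x_j}. For all vectors x, ℓ ∈ ℝ^n with x ≥ 0, 0 ≤ ℓ_i ≤ 1 for all i, we have smin(x+ℓ) − smin(x) ≥ (1/2)·∇smin(x)ᵀℓ. -/
/-!
Write `p i = e^{-x i} / Σⱼ e^{-x j}` for the softmin weights. Then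
`smin(x + ℓ) - smin(x) = -ln Σᵢ pᵢ e^{-ℓᵢ} ≥ 1 - Σᵢ pᵢ e^{-ℓᵢ} = Σᵢ pᵢ (1 - e^{-ℓᵢ})`
by `ln y ≤ y - 1`, and `1 - e^{-t} ≥ t / 2` on `[0, 1]` bounds each term from below.
-/

open Real Finset

lemma half_le_one_sub_exp_neg {t : ℝ} (h0 : 0 ≤ t) (h1 : t ≤ 1) :
    t / 2 ≤ 1 - exp (-t) := by
  have hexp : exp (-t) * exp t = 1 := by rw [← exp_add, neg_add_cancel, exp_zero]
  nlinarith [mul_le_mul_of_nonneg_left (add_one_le_exp t) (exp_pos (-t)).le]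

lemma sum_weight_mul_one_sub_exp_neg_le_log_sub_log {ι : Type*} [Fintype ι]
    (a ℓ : ι → ℝ) (ha : ∀ i, 0 < a i) :
    ∑ i, a i / (∑ j, a j) * (1 - exp (-ℓ i)) ≤
      log (∑ i, a i) - log (∑ i, a i * exp (-ℓ i)) := by
  rcases isEmpty_or_nonempty ι with hι | hι
  · simp
  set S := ∑ j, a j
  set T := ∑ i, a i * exp (-ℓ i)
  have hS : 0 < S := sum_pos (fun i _ => ha i) univ_nonempty
  have hT : 0 < T := sum_pos (fun i _ => mul_pos (ha i) (exp_pos _)) univ_nonempty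
  calc ∑ i, a i / S * (1 - exp (-ℓ i)) = 1 - T / S := by
        simp only [mul_one_sub, sum_sub_distrib, div_mul_eq_mul_div, ← sum_div]
        exact congrArg (· - T / S) (div_self hS.ne')
    _ ≤ -log (T / S) := by linarith [log_le_sub_one_of_pos (div_pos hT hS)]
    _ = log S - log T := by rw [log_div hT.ne' hS.ne']; ring

theorem stmt_8_general (n : ℕ) (x ℓ : Fin n → ℝ)
    (hℓ0 : ∀ i, 0 ≤ ℓ i) (hℓ1 : ∀ i, ℓ i ≤ 1) :
    (-Real.log (∑ i, Real.exp (-(x i + ℓ i)))) - (-Real.log (∑ i, Real.exp (-x i))) ≥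
      (1 / 2) * ∑ i, (Real.exp (-x i) / ∑ j, Real.exp (-x j)) * ℓ i := by
  have hsplit : ∀ i, exp (-(x i + ℓ i)) = exp (-x i) * exp (-ℓ i) := fun i => by
    rw [neg_add, exp_add]
  have hweight : ∀ i, 0 ≤ exp (-x i) / ∑ j, exp (-x j) := fun i => by positivity
  calc (1 / 2) * ∑ i, (exp (-x i) / ∑ j, exp (-x j)) * ℓ i
      ≤ ∑ i, exp (-x i) / (∑ j, exp (-x j)) * (1 - exp (-ℓ i)) := by
        rw [mul_sum]
        refine sum_le_sum fun i _ => ?_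
        nlinarith [mul_le_mul_of_nonneg_left (half_le_one_sub_exp_neg (hℓ0 i) (hℓ1 i))
          (hweight i)]
    _ ≤ log (∑ i, exp (-x i)) - log (∑ i, exp (-x i) * exp (-ℓ i)) :=
        sum_weight_mul_one_sub_exp_neg_le_log_sub_log _ ℓ fun i => exp_pos _
    _ = _ := by simp only [hsplit]; ring

theorem stmt_8 (n : ℕ) (hn : 0 < n) (x ℓ : Fin n → ℝ)
    (hx : ∀ i, 0 ≤ x i) (hℓ0 : ∀ i, 0 ≤ ℓ i) (hℓ1 : ∀ i, ℓ i ≤ 1) :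
    (-Real.log (∑ i, Real.exp (-(x i + ℓ i)))) - (-Real.log (∑ i, Real.exp (-x i))) ≥
      (1 / 2) * ∑ i, (Real.exp (-x i) / ∑ j, Real.exp (-x j)) * ℓ i :=
  stmt_8_general n x ℓ hℓ0 hℓ1
end

section
/- Let smin(x) = −ln(Σ_i e^{−x_i}) and ∇smin(x)_i = e^{−x_i}/Σ_j e^{−x_j}. For all vectors x, ℓ ∈ ℝ^n with x, ℓ ≥ 0, the ℓ_1 distance of gradients satisfies ‖∇smin(x+ℓ) − ∇smin(x)‖_1 ≤ 2·∇smin(x)ᵀℓ. -/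
/-!
With `p = ∇smin x` and `q = ∇smin (x + ℓ)`, both probability vectors, `‖q - p‖₁ = 2 ∑ᵢ (pᵢ - qᵢ)⁺`.
Adding `ℓ ≥ 0` multiplies each weight `e^{-xᵢ}` by `e^{-ℓᵢ}` and can only shrink the normaliser,
so `qᵢ ≥ pᵢ e^{-ℓᵢ} ≥ pᵢ (1 - ℓᵢ)`, i.e. `(pᵢ - qᵢ)⁺ ≤ pᵢ ℓᵢ`.
-/

open Real Finset

theorem Finset.sum_abs_sub_eq_two_mul_sum_posPart {ι : Type*} {s : Finset ι} {p q : ι → ℝ}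
    (h : ∑ i ∈ s, p i = ∑ i ∈ s, q i) :
    ∑ i ∈ s, |q i - p i| = 2 * ∑ i ∈ s, (p i - q i)⁺ := by
  have habs : ∀ i, |q i - p i| = 2 * (p i - q i)⁺ - (p i - q i) := fun i => by
    rw [abs_sub_comm, ← posPart_add_negPart]
    linarith [posPart_sub_negPart (p i - q i)]
  simp only [habs, sum_sub_distrib, ← mul_sum, h, sub_self, sub_zero]

variable {ι : Type*} [Fintype ι]

noncomputable def softminGrad (x : ι → ℝ) (i : ι) : ℝ :=
  exp (-x i) / ∑ j, exp (-x j)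

theorem sum_exp_neg_pos [Nonempty ι] (x : ι → ℝ) : 0 < ∑ j, exp (-x j) :=
  sum_pos (fun _ _ => exp_pos _) univ_nonempty

theorem sum_softminGrad [Nonempty ι] (x : ι → ℝ) : ∑ i, softminGrad x i = 1 := by
  simp only [softminGrad, ← sum_div, div_self (sum_exp_neg_pos x).ne']

theorem softminGrad_nonneg (x : ι → ℝ) (i : ι) : 0 ≤ softminGrad x i :=
  div_nonneg (exp_pos _).le (sum_nonneg fun _ _ => (exp_pos _).le)

theorem softminGrad_mul_exp_neg_le_softminGrad_add {x ℓ : ι → ℝ} (hℓ : 0 ≤ ℓ) (i : ι) :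
    softminGrad x i * exp (-ℓ i) ≤ softminGrad (x + ℓ) i := by
  have : Nonempty ι := ⟨i⟩
  have hsum_le : ∑ j, exp (-(x + ℓ) j) ≤ ∑ j, exp (-x j) :=
    sum_le_sum fun j _ => exp_le_exp.2 (by simpa using hℓ j)
  calc softminGrad x i * exp (-ℓ i) = exp (-(x + ℓ) i) / ∑ j, exp (-x j) := by
        rw [softminGrad, div_mul_eq_mul_div, ← exp_add, Pi.add_apply, neg_add]
    _ ≤ softminGrad (x + ℓ) i :=
        div_le_div_of_nonneg_left (exp_pos _).le (sum_exp_neg_pos _) hsum_le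

theorem posPart_softminGrad_sub_softminGrad_add_le {x ℓ : ι → ℝ} (hℓ : 0 ≤ ℓ) (i : ι) :
    (softminGrad x i - softminGrad (x + ℓ) i)⁺ ≤ softminGrad x i * ℓ i := by
  have hp := softminGrad_nonneg x i
  have hexp : 1 - ℓ i ≤ exp (-ℓ i) := by linarith [add_one_le_exp (-ℓ i)]
  refine sup_le ?_ (mul_nonneg hp (hℓ i))
  linarith [softminGrad_mul_exp_neg_le_softminGrad_add (x := x) hℓ i,
    mul_le_mul_of_nonneg_left hexp hp]

theorem sum_abs_softminGrad_add_sub_le {x ℓ : ι → ℝ} (hℓ : 0 ≤ ℓ) :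
    ∑ i, |softminGrad (x + ℓ) i - softminGrad x i| ≤ 2 * ∑ i, softminGrad x i * ℓ i := by
  cases isEmpty_or_nonempty ι
  · simp
  rw [sum_abs_sub_eq_two_mul_sum_posPart (by rw [sum_softminGrad, sum_softminGrad])]
  gcongr with i
  exact posPart_softminGrad_sub_softminGrad_add_le hℓ i

theorem stmt_9_general (n : ℕ) (x ℓ : Fin n → ℝ)
    (hℓ : ∀ i, 0 ≤ ℓ i) :
    ∑ i, |Real.exp (-(x i + ℓ i)) / (∑ j, Real.exp (-(x j + ℓ j))) -
          Real.exp (-x i) / (∑ j, Real.exp (-x j))| ≤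
      2 * ∑ i, (Real.exp (-x i) / ∑ j, Real.exp (-x j)) * ℓ i :=
  sum_abs_softminGrad_add_sub_le (x := x) hℓ

theorem stmt_9 (n : ℕ) (hn : 0 < n) (x ℓ : Fin n → ℝ)
    (hx : ∀ i, 0 ≤ x i) (hℓ : ∀ i, 0 ≤ ℓ i) :
    ∑ i, |Real.exp (-(x i + ℓ i)) / (∑ j, Real.exp (-(x j + ℓ j))) -
          Real.exp (-x i) / (∑ j, Real.exp (-x j))| ≤
      2 * ∑ i, (Real.exp (-x i) / ∑ j, Real.exp (-x j)) * ℓ i :=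
  stmt_9_general n x ℓ hℓ
end

section
/- Let smin_c(x) = c·smin(x/c) with c ≥ 1. For all x, ℓ ∈ ℝ^n with x ≥ 0 and 0 ≤ ℓ_i ≤ 1 for all i, smin_c(x+ℓ) − smin_c(x) ≥ (1/2)·∇smin_c(x)ᵀℓ. -/
/-!
Write `w i = exp (-(x i / c))`, `S = ∑ w i` and `S' = ∑ w i * exp (-(ℓ i / c))`, so that the left-hand
side is `c * log (S / S')`. Since `log (S / S') ≥ 1 - S' / S`, it suffices that
`c * (1 - exp (-(t / c))) ≥ t / 2` for `0 ≤ t ≤ c`, which follows from `exp (-u) ≤ 1 / (1 + u) ≤ 1 - u / 2`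
for `u ∈ [0, 1]`.
-/

open Real Finset

lemma Real.exp_neg_le_one_sub_half {u : ℝ} (hu0 : 0 ≤ u) (hu1 : u ≤ 1) : exp (-u) ≤ 1 - u / 2 := by
  have hinv : exp (-u) * (u + 1) ≤ 1 := by
    calc exp (-u) * (u + 1) ≤ exp (-u) * exp u := by gcongr; exact add_one_le_exp u
      _ = 1 := by rw [← exp_add, neg_add_cancel, exp_zero]
  nlinarith [exp_pos (-u)]

lemma Real.half_le_mul_one_sub_exp_neg_div {c t : ℝ} (ht0 : 0 ≤ t) (htc : t ≤ c) :
    t / 2 ≤ c * (1 - exp (-(t / c))) := by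
  rcases (ht0.trans htc).eq_or_lt with rfl | hc
  · simp [le_antisymm htc ht0]
  have hu0 : 0 ≤ t / c := div_nonneg ht0 hc.le
  have hu1 : t / c ≤ 1 := (div_le_one hc).2 htc
  calc t / 2 = c * ((t / c) / 2) := by field_simp
    _ ≤ c * (1 - exp (-(t / c))) := by
      gcongr; linarith [exp_neg_le_one_sub_half hu0 hu1]

lemma Real.one_sub_div_le_log_sub_log {a b : ℝ} (ha : 0 < a) (hb : 0 < b) :
    1 - b / a ≤ log a - log b := by
  simpa [← log_div ha.ne' hb.ne', inv_div] using one_sub_inv_le_log_of_pos (div_pos ha hb)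

theorem half_weighted_mean_le_mul_log_sum_div {ι : Type*} [Fintype ι] {c : ℝ} (w ℓ : ι → ℝ)
    (hw : ∀ i, 0 < w i) (hℓ0 : ∀ i, 0 ≤ ℓ i) (hℓc : ∀ i, ℓ i ≤ c) :
    (1 / 2) * ∑ i, (w i / ∑ j, w j) * ℓ i ≤
      c * (log (∑ i, w i) - log (∑ i, w i * exp (-(ℓ i / c)))) := by
  cases isEmpty_or_nonempty ι
  · simp
  set S := ∑ i, w i
  set S' := ∑ i, w i * exp (-(ℓ i / c))
  have hS : 0 < S := sum_pos (fun i _ ↦ hw i) univ_nonempty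
  have hS' : 0 < S' := sum_pos (fun i _ ↦ mul_pos (hw i) (exp_pos _)) univ_nonempty
  have hc : 0 ≤ c := (hℓ0 (Classical.arbitrary ι)).trans (hℓc _)
  have hdiff : (1 / 2) * ∑ i, w i * ℓ i ≤ c * (S - S') := by
    rw [← sum_sub_distrib, mul_sum, mul_sum]
    refine sum_le_sum fun i _ ↦ ?_
    have := mul_le_mul_of_nonneg_left (half_le_mul_one_sub_exp_neg_div (hℓ0 i) (hℓc i)) (hw i).le
    linarith
  calc (1 / 2) * ∑ i, (w i / S) * ℓ i = (1 / 2) * (∑ i, w i * ℓ i) / S := by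
        rw [mul_div_assoc, sum_div]; simp_rw [div_mul_eq_mul_div]
    _ ≤ c * (S - S') / S := by gcongr
    _ = c * (1 - S' / S) := by field_simp
    _ ≤ c * (log S - log S') := mul_le_mul_of_nonneg_left (one_sub_div_le_log_sub_log hS hS') hc

theorem stmt_13_general (n : ℕ) (c : ℝ) (hc : 1 ≤ c) (x ℓ : Fin n → ℝ)
    (hℓ0 : ∀ i, 0 ≤ ℓ i) (hℓ1 : ∀ i, ℓ i ≤ 1) :
    c * (-Real.log (∑ i, Real.exp (-((x i + ℓ i) / c)))) -
      c * (-Real.log (∑ i, Real.exp (-(x i / c)))) ≥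
    (1 / 2) * ∑ i, (Real.exp (-(x i / c)) / ∑ j, Real.exp (-(x j / c))) * ℓ i := by
  have hsplit : ∀ i, exp (-((x i + ℓ i) / c)) = exp (-(x i / c)) * exp (-(ℓ i / c)) := fun i ↦ by
    rw [← exp_add]; ring_nf
  simp_rw [hsplit]
  have := half_weighted_mean_le_mul_log_sum_div (fun i ↦ exp (-(x i / c))) ℓ (fun _ ↦ exp_pos _) hℓ0
    fun i ↦ (hℓ1 i).trans hc
  linarith

theorem stmt_13 (n : ℕ) (hn : 0 < n) (c : ℝ) (hc : 1 ≤ c) (x ℓ : Fin n → ℝ)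
    (hx : ∀ i, 0 ≤ x i) (hℓ0 : ∀ i, 0 ≤ ℓ i) (hℓ1 : ∀ i, ℓ i ≤ 1) :
    c * (-Real.log (∑ i, Real.exp (-((x i + ℓ i) / c)))) -
      c * (-Real.log (∑ i, Real.exp (-(x i / c)))) ≥
    (1 / 2) * ∑ i, (Real.exp (-(x i / c)) / ∑ j, Real.exp (-(x j / c))) * ℓ i :=
  stmt_13_general n c hc x ℓ hℓ0 hℓ1
end
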